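/- Suppose M is an ℝ[X]-submodule of Den[a,b] (with X acting as the indefinite Denjoy integral) which contains C[a,b], and suppose p ∈ ℝ[X] is a polynomial not divisible by X (i.e. p has nonzero constant term). Then multiplication by p is an automorphism of the ℝ[X]-module M; in particular the map f ↦ p·f is a bijection of M onto M. (In particular, taking M = C[a,b]: for p = c₀ + c₁X + ... + c_kX^k with c₀ ≠ 0, the operator f ↦ c₀f + c₁∫_a^x f + c₂∫_a^x∫_a^t f + ... is a bijection of C[a,b].) -/

import Mathlib

open MeasureTheory Set Filter

noncomputable section

attribute [local instance] Classical.propDecidable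

/-- The oscillation `ω(F, J)` of `F` on the set `J`. -/
def osc (F : ℝ → ℝ) (J : Set ℝ) : ℝ :=
  sSup {d : ℝ | ∃ x ∈ J, ∃ y ∈ J, d = |F x - F y|}

/-- `D` is a `K`-edged pre-partition of `[a,b]`: a finite nonempty collection of
pairwise non-overlapping closed subintervals of `[a,b]` whose endpoints lie in `K`. -/
def IsPrePartition (a b : ℝ) (K : Set ℝ) (D : Finset (ℝ × ℝ)) : Prop :=
  D.Nonempty ∧
  (∀ p ∈ D, p.1 ≤ p.2 ∧ p.1 ∈ K ∧ p.2 ∈ K ∧ Icc p.1 p.2 ⊆ Icc a b) ∧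
  (D : Set (ℝ × ℝ)).Pairwise fun p q => p.2 ≤ q.1 ∨ q.2 ≤ p.1

/-- `F ∈ AC_*(K)`: absolute continuity in the restricted sense on `K`. -/
def ACStar (a b : ℝ) (F : ℝ → ℝ) (K : Set ℝ) : Prop :=
  ∀ ε > (0:ℝ), ∃ δ > (0:ℝ), ∀ D : Finset (ℝ × ℝ), IsPrePartition a b K D →
    (∑ p ∈ D, (p.2 - p.1)) < δ → (∑ p ∈ D, osc F (Icc p.1 p.2)) < ε

/-- `F ∈ ACG_*(K)`: `K` is a countable union of closed sets `Kₙ ⊆ [a,b]` with `F ∈ AC_*(Kₙ)`. -/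
def ACGStar (a b : ℝ) (F : ℝ → ℝ) (K : Set ℝ) : Prop :=
  ∃ C : ℕ → Set ℝ, (∀ n, IsClosed (C n) ∧ C n ⊆ Icc a b ∧ ACStar a b F (C n)) ∧
    K = ⋃ n, C n

/-- `F` is the indefinite Denjoy integral of `f` on `[a,b]`:
`F` is continuous on `[a,b]`, `F(a) = 0`, `F ∈ ACG_*([a,b])`, and `F' = f` a.e. on `[a,b]`. -/
def HasDenjoyIntegralFn (a b : ℝ) (f F : ℝ → ℝ) : Prop :=
  ContinuousOn F (Icc a b) ∧ F a = 0 ∧ ACGStar a b F (Icc a b) ∧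
    ∀ᵐ x ∂(volume.restrict (Icc a b)), HasDerivAt F (f x) x

/-- `f ∈ Den[a,b]`: `f` is Denjoy integrable on `[a,b]`. -/
def DenjoyIntegrable (a b : ℝ) (f : ℝ → ℝ) : Prop :=
  ∃ F : ℝ → ℝ, HasDenjoyIntegralFn a b f F

/-- The Denjoy integral `∫_a^b f` (junk value `0` if `f` is not Denjoy integrable). -/
def denjoyIntegral (a b : ℝ) (f : ℝ → ℝ) : ℝ :=
  if h : DenjoyIntegrable a b f then Classical.choose h b else 0

/-- `M[a,b]`: measurable functions on `[a,b]` modulo a.e. equivalence. -/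
abbrev MSpace (a b : ℝ) := ℝ →ₘ[volume.restrict (Icc a b)] ℝ

/-- The action of the indeterminate `X`: the indefinite Denjoy integral
`(X·g)(x) = ∫_a^x g` (junk value `0` if `g` is not Denjoy integrable). -/
def Xop (a b : ℝ) (g : MSpace a b) : MSpace a b :=
  if h : ∃ F : C(ℝ, ℝ), HasDenjoyIntegralFn a b (fun x => g x) ⇑F then
    AEEqFun.mk ⇑(Classical.choose h) (Classical.choose h).continuous.aestronglyMeasurable
  else 0


/-!
On `M`, the operator `X` factors through `C[a,b]`: it maps `Den[a,b]` into `C[a,b]`, and on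
`C[a,b]` it is the Volterra operator `V`, whose powers satisfy `‖Vⁿ‖ ≤ (b - a)ⁿ / n!`. Writing
`X = ι ∘ ρ` with `ι : C[a,b] → M` the inclusion, so that `ρ ∘ ι = V`, the operator `p(ι ∘ ρ)` is
invertible as soon as `p(ρ ∘ ι) = p(V)` is (a polynomial form of Jacobson's lemma, valid because
`p(0) ≠ 0`). Finally `p(V) = p(0) (1 - x)` with `x` a multiple of `V` commuting with it, so
`‖xᵐ‖ → 0` and `p(V)` is a unit of the Banach algebra of operators on `C[a,b]`.

That `X` is well defined and linear on `Den[a,b]` rests on the uniqueness of Denjoy primitives: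
an `ACG*` function with derivative `0` a.e. maps `[a,b]` onto a null set (Sard's lemma where the
derivative vanishes, Luzin's property (N) of `AC*` functions on closed sets elsewhere), so by the
intermediate value theorem it is constant.
-/

section OperatorAlgebra

open Polynomial

section SwapComposition

variable {K M N : Type*} [Field K] [AddCommGroup M] [Module K M] [AddCommGroup N] [Module K N]

theorem LinearMap.bijective_smul_one_add_comp_swap {c : K} (hc : c ≠ 0) (f : M →ₗ[K] N)
    (g : N →ₗ[K] M) (h : Function.Bijective (c • 1 + f ∘ₗ g : Module.End K N)) :
    Function.Bijective (c • 1 + g ∘ₗ f : Module.End K M) := by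
  refine ⟨(injective_iff_map_eq_zero _).2 fun x hx => ?_, fun z => ?_⟩
  · replace hx : c • x + g (f x) = 0 := hx
    have hfx : f x = 0 := h.1 <| by
      change c • f x + f (g (f x)) = c • (0 : N) + f (g 0)
      rw [← map_smul, ← map_add, hx]
      simp
    simpa [hfx, hc] using hx
  · obtain ⟨y, hy⟩ := h.2 (f z)
    replace hy : c • y + f (g y) = f z := hy
    refine ⟨c⁻¹ • (z - g y), ?_⟩
    change c • c⁻¹ • (z - g y) + g (f (c⁻¹ • (z - g y))) = z
    rw [map_smul, map_smul, map_sub, ← hy, add_sub_cancel_right, map_smul, smul_smul,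
      smul_smul, mul_inv_cancel₀ hc, inv_mul_cancel₀ hc, one_smul, one_smul, sub_add_cancel]

theorem LinearMap.comp_aeval_comp_swap (f : M →ₗ[K] N) (g : N →ₗ[K] M) (q : K[X]) :
    f ∘ₗ aeval (g ∘ₗ f) q = aeval (f ∘ₗ g) q ∘ₗ f := by
  have hpow (k : ℕ) (x : M) : f (((g ∘ₗ f) ^ k) x) = ((f ∘ₗ g) ^ k) (f x) :=
    LinearMap.congr_fun (Module.End.commute_pow_left_of_commute (f := f) (g := g ∘ₗ f)
      (g₂ := f ∘ₗ g) rfl k).symm x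
  ext x
  simp only [LinearMap.comp_apply, aeval_eq_sum_range, LinearMap.sum_apply,
    LinearMap.smul_apply, map_sum, map_smul, hpow]

theorem Polynomial.aeval_eq_smul_one_add_mul_divX {A : Type*} [Ring A] [Algebra K A] (x : A)
    (p : K[X]) : aeval x p = p.coeff 0 • 1 + x * aeval x p.divX := by
  conv_lhs => rw [← X_mul_divX_add p]
  rw [map_add, map_mul, aeval_X, aeval_C, add_comm, Algebra.algebraMap_eq_smul_one]

theorem Polynomial.bijective_aeval_comp_swap {p : K[X]} (hp : p.coeff 0 ≠ 0) (f : M →ₗ[K] N)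
    (g : N →ₗ[K] M) (h : Function.Bijective (aeval (f ∘ₗ g) p)) :
    Function.Bijective (aeval (g ∘ₗ f) p) := by
  have hfg : aeval (f ∘ₗ g) p = p.coeff 0 • 1 + (aeval (f ∘ₗ g) p.divX ∘ₗ f) ∘ₗ g := by
    have hcomm : Commute (f ∘ₗ g) (aeval (f ∘ₗ g) p.divX) := by
      simpa using (commute_X p.divX).map (aeval (f ∘ₗ g))
    rw [aeval_eq_smul_one_add_mul_divX, hcomm.eq]
    rfl
  have hgf : aeval (g ∘ₗ f) p = p.coeff 0 • 1 + g ∘ₗ (aeval (f ∘ₗ g) p.divX ∘ₗ f) := by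
    rw [aeval_eq_smul_one_add_mul_divX, ← LinearMap.comp_aeval_comp_swap]
    rfl
  rw [hfg] at h
  rw [hgf]
  exact LinearMap.bijective_smul_one_add_comp_swap hp _ g h

end SwapComposition

theorem coe_aeval_apply_eq_sum_iterate {R E : Type*} [CommSemiring R] [AddCommMonoid E]
    [Module R E] {M : Submodule R E} {f : E → E} (X : Module.End R M)
    (hX : ∀ g : M, (X g : E) = f g) (p : R[X]) (g : M) :
    (aeval X p g : E) = p.sum fun i c => c • f^[i] g := by
  have hiter (i : ℕ) : ((X ^ i) g : E) = f^[i] g := by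
    rw [Module.End.pow_apply]
    exact Function.Semiconj.iterate_right hX i g
  simp [aeval_def, eval₂_eq_sum, Polynomial.sum, LinearMap.sum_apply, hiter,
    Module.algebraMap_end_apply]

theorem isUnit_one_sub_of_norm_pow_lt_one {A : Type*} [NormedRing A] [CompleteSpace A] {x : A}
    {m : ℕ} (h : ‖x ^ m‖ < 1) : IsUnit (1 - x) := by
  have hcomm : Commute (1 - x) (∑ i ∈ Finset.range m, x ^ i) :=
    Commute.sum_right _ _ _ fun i _ =>
      (Commute.one_left _).sub_left ((Commute.refl x).pow_right i)
  exact (hcomm.isUnit_mul_iff.1 (mul_neg_geom_sum x m ▸ (Units.oneSub _ h).isUnit)).1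

theorem isUnit_aeval_of_norm_pow_le {𝕜 A : Type*} [NormedField 𝕜] [NormedRing A]
    [NormedAlgebra 𝕜 A] [CompleteSpace A] {V : A} {C : ℝ}
    (hV : ∀ n, ‖V ^ n‖ ≤ C ^ n / n.factorial) {p : 𝕜[X]} (hp : p.coeff 0 ≠ 0) :
    IsUnit (aeval V p) := by
  set y := -(p.coeff 0)⁻¹ • aeval V p.divX
  have hVq : Commute V (aeval V p.divX) := by simpa using (commute_X p.divX).map (aeval V)
  have hsplit : aeval V p = algebraMap 𝕜 A (p.coeff 0) * (1 - y * V) := by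
    rw [aeval_eq_smul_one_add_mul_divX, ← Algebra.smul_def, smul_sub, hVq.eq]
    simp [y, smul_smul, hp]
  have hbound (m : ℕ) (hm : 0 < m) : ‖(y * V) ^ m‖ ≤ (‖y‖ * C) ^ m / m.factorial := by
    rw [(hVq.smul_right _).symm.mul_pow, mul_pow, mul_div_assoc]
    exact (norm_mul_le _ _).trans (mul_le_mul (norm_pow_le' y hm) (hV m) (norm_nonneg _)
      (by positivity))
  obtain ⟨m, hm, hm1⟩ := (((FloorSemiring.tendsto_pow_div_factorial_atTop
    (‖y‖ * C)).eventually_lt_const one_pos).and (eventually_ge_atTop 1)).exists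
  rw [hsplit]
  exact ((isUnit_iff_ne_zero.2 hp).map _).mul
    (isUnit_one_sub_of_norm_pow_lt_one ((hbound m hm1).trans_lt hm))

theorem ContinuousLinearMap.coe_aeval {𝕜 E : Type*} [NormedField 𝕜]
    [NormedAddCommGroup E] [NormedSpace 𝕜 E] (V : E →L[𝕜] E) (p : 𝕜[X]) :
    ((aeval V p : E →L[𝕜] E) : E →ₗ[𝕜] E) = aeval (V : E →ₗ[𝕜] E) p := by
  simp [aeval_eq_sum_range]

end OperatorAlgebra

section Oscillation

variable {F G : ℝ → ℝ} {J : Set ℝ}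

lemma osc_nonneg (F : ℝ → ℝ) (J : Set ℝ) : 0 ≤ osc F J :=
  Real.sSup_nonneg fun _ ⟨_, _, _, _, hd⟩ => hd ▸ abs_nonneg _

lemma osc_le {C : ℝ} (hC : 0 ≤ C) (h : ∀ x ∈ J, ∀ y ∈ J, |F x - F y| ≤ C) : osc F J ≤ C :=
  Real.sSup_le (fun _ ⟨x, hx, y, hy, hd⟩ => hd ▸ h x hx y hy) hC

lemma abs_sub_le_osc (hJ : IsCompact J) (hF : ContinuousOn F J) {x y : ℝ} (hx : x ∈ J)
    (hy : y ∈ J) : |F x - F y| ≤ osc F J := by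
  obtain ⟨C, hC⟩ := hJ.exists_bound_of_continuousOn hF
  refine le_csSup ⟨C + C, ?_⟩ ⟨x, hx, y, hy, rfl⟩
  rintro _ ⟨x', hx', y', hy', rfl⟩
  exact (abs_sub _ _).trans (add_le_add (hC x' hx') (hC y' hy'))

lemma osc_congr (h : EqOn F G J) : osc F J = osc G J := by
  unfold osc
  congr 1
  ext d
  constructor <;> rintro ⟨x, hx, y, hy, rfl⟩ <;> exact ⟨x, hx, y, hy, by rw [h hx, h hy]⟩

lemma osc_add_le (hJ : IsCompact J) (hF : ContinuousOn F J) (hG : ContinuousOn G J) :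
    osc (F + G) J ≤ osc F J + osc G J :=
  osc_le (add_nonneg (osc_nonneg F J) (osc_nonneg G J)) fun x hx y hy =>
    calc |(F + G) x - (F + G) y| = |(F x - F y) + (G x - G y)| := by
          simp only [Pi.add_apply]; ring_nf
      _ ≤ |F x - F y| + |G x - G y| := abs_add_le _ _
      _ ≤ osc F J + osc G J :=
        add_le_add (abs_sub_le_osc hJ hF hx hy) (abs_sub_le_osc hJ hG hx hy)

lemma osc_const_mul_le (c : ℝ) (hJ : IsCompact J) (hF : ContinuousOn F J) :
    osc (fun x => c * F x) J ≤ |c| * osc F J :=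
  osc_le (mul_nonneg (abs_nonneg c) (osc_nonneg F J)) fun x hx y hy => by
    rw [← mul_sub, abs_mul]
    exact mul_le_mul_of_nonneg_left (abs_sub_le_osc hJ hF hx hy) (abs_nonneg c)

lemma volume_image_le_osc (hJ : IsCompact J) (hF : ContinuousOn F J) :
    volume (F '' J) ≤ ENNReal.ofReal (osc F J) :=
  (Real.volume_le_diam _).trans <| Metric.ediam_le <| by
    rintro _ ⟨x, hx, rfl⟩ _ ⟨y, hy, rfl⟩
    rw [edist_dist, Real.dist_eq]
    exact ENNReal.ofReal_le_ofReal (abs_sub_le_osc hJ hF hx hy)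

end Oscillation

section ACStar

variable {a b : ℝ} {F G : ℝ → ℝ} {K K' : Set ℝ}

lemma ACStar.mono (hF : ACStar a b F K) (hK : K' ⊆ K) : ACStar a b F K' := fun ε hε => by
  obtain ⟨δ, hδ, h⟩ := hF ε hε
  exact ⟨δ, hδ, fun D ⟨hne, hD, hdisj⟩ => h D ⟨hne, fun p hp =>
    ⟨(hD p hp).1, hK (hD p hp).2.1, hK (hD p hp).2.2.1, (hD p hp).2.2.2⟩, hdisj⟩⟩

lemma ACStar.congr (hF : ACStar a b F K) (hFG : EqOn F G (Icc a b)) : ACStar a b G K :=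
  fun ε hε => by
    obtain ⟨δ, hδ, h⟩ := hF ε hε
    refine ⟨δ, hδ, fun D hD hlen => ?_⟩
    rw [← Finset.sum_congr rfl fun p hp => osc_congr (hFG.mono (hD.2.1 p hp).2.2.2)]
    exact h D hD hlen

lemma ACStar.add (hF : ACStar a b F K) (hG : ACStar a b G K) (hFc : ContinuousOn F (Icc a b))
    (hGc : ContinuousOn G (Icc a b)) : ACStar a b (F + G) K := fun ε hε => by
  obtain ⟨δ₁, hδ₁, h₁⟩ := hF (ε / 2) (half_pos hε)
  obtain ⟨δ₂, hδ₂, h₂⟩ := hG (ε / 2) (half_pos hε)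
  refine ⟨min δ₁ δ₂, lt_min hδ₁ hδ₂, fun D hD hlen => ?_⟩
  calc ∑ p ∈ D, osc (F + G) (Icc p.1 p.2)
      ≤ ∑ p ∈ D, (osc F (Icc p.1 p.2) + osc G (Icc p.1 p.2)) :=
        Finset.sum_le_sum fun p hp => osc_add_le isCompact_Icc
          (hFc.mono (hD.2.1 p hp).2.2.2) (hGc.mono (hD.2.1 p hp).2.2.2)
    _ < ε / 2 + ε / 2 := by
        rw [Finset.sum_add_distrib]
        exact add_lt_add (h₁ D hD (hlen.trans_le (min_le_left _ _)))
          (h₂ D hD (hlen.trans_le (min_le_right _ _)))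
    _ = ε := add_halves ε

lemma ACStar.const_mul (hF : ACStar a b F K) (hFc : ContinuousOn F (Icc a b)) (c : ℝ) :
    ACStar a b (fun x => c * F x) K := fun ε hε => by
  obtain ⟨δ, hδ, h⟩ := hF (ε / (|c| + 1)) (by positivity)
  refine ⟨δ, hδ, fun D hD hlen => ?_⟩
  have hsum : 0 ≤ ∑ p ∈ D, osc F (Icc p.1 p.2) := Finset.sum_nonneg fun _ _ => osc_nonneg _ _
  calc ∑ p ∈ D, osc (fun x => c * F x) (Icc p.1 p.2)
      ≤ ∑ p ∈ D, |c| * osc F (Icc p.1 p.2) :=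
        Finset.sum_le_sum fun p hp => osc_const_mul_le c isCompact_Icc
          (hFc.mono (hD.2.1 p hp).2.2.2)
    _ ≤ (|c| + 1) * ∑ p ∈ D, osc F (Icc p.1 p.2) := by
        rw [← Finset.mul_sum]; gcongr; linarith
    _ < (|c| + 1) * (ε / (|c| + 1)) := by gcongr; exact h D hD hlen
    _ = ε := by field_simp

lemma ACStar.of_lipschitzOnWith {L : NNReal} (hF : LipschitzOnWith L F (Icc a b)) :
    ACStar a b F K := fun ε hε => by
  refine ⟨ε / (L + 1), by positivity, fun D hD hlen => ?_⟩
  have hosc : ∀ p ∈ D, osc F (Icc p.1 p.2) ≤ L * (p.2 - p.1) := fun p hp => by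
    obtain ⟨hp12, -, -, hpab⟩ := hD.2.1 p hp
    refine osc_le (mul_nonneg L.2 (sub_nonneg.2 hp12)) fun x hx y hy => ?_
    rw [← Real.dist_eq]
    exact (hF.dist_le_mul x (hpab hx) y (hpab hy)).trans
      (mul_le_mul_of_nonneg_left (Real.dist_le_of_mem_Icc hx hy) L.2)
  have hlen0 : 0 ≤ ∑ p ∈ D, (p.2 - p.1) :=
    Finset.sum_nonneg fun p hp => sub_nonneg.2 (hD.2.1 p hp).1
  calc ∑ p ∈ D, osc F (Icc p.1 p.2) ≤ L * ∑ p ∈ D, (p.2 - p.1) := by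
        rw [Finset.mul_sum]; exact Finset.sum_le_sum hosc
    _ ≤ (L + 1) * ∑ p ∈ D, (p.2 - p.1) := by gcongr; linarith
    _ < (L + 1) * (ε / (L + 1)) := by gcongr
    _ = ε := by field_simp

lemma ACStar.acgStar (hF : ACStar a b F (Icc a b)) : ACGStar a b F (Icc a b) :=
  ⟨fun _ => Icc a b, fun _ => ⟨isClosed_Icc, subset_rfl, hF⟩, (iUnion_const _).symm⟩

lemma ACGStar.congr (hF : ACGStar a b F K) (hFG : EqOn F G (Icc a b)) : ACGStar a b G K := by
  obtain ⟨C, hC, rfl⟩ := hF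
  exact ⟨C, fun n => ⟨(hC n).1, (hC n).2.1, (hC n).2.2.congr hFG⟩, rfl⟩

lemma ACGStar.add (hF : ACGStar a b F K) (hG : ACGStar a b G K) (hFc : ContinuousOn F (Icc a b))
    (hGc : ContinuousOn G (Icc a b)) : ACGStar a b (F + G) K := by
  obtain ⟨C, hC, rfl⟩ := hF
  obtain ⟨D, hD, hCD⟩ := hG
  refine ⟨fun k => C k.unpair.1 ∩ D k.unpair.2, fun k => ⟨(hC _).1.inter (hD _).1,
    inter_subset_left.trans (hC _).2.1, ((hC _).2.2.mono inter_subset_left).add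
      ((hD _).2.2.mono inter_subset_right) hFc hGc⟩, ?_⟩
  ext x
  simp only [mem_iUnion, mem_inter_iff]
  constructor
  · rintro ⟨i, hi⟩
    obtain ⟨j, hj⟩ := mem_iUnion.1 (hCD ▸ mem_iUnion.2 ⟨i, hi⟩ : x ∈ ⋃ j, D j)
    exact ⟨Nat.pair i j, by simpa using ⟨hi, hj⟩⟩
  · rintro ⟨k, hk, -⟩
    exact ⟨_, hk⟩

lemma ACGStar.const_mul (hF : ACGStar a b F K) (hFc : ContinuousOn F (Icc a b)) (c : ℝ) :
    ACGStar a b (fun x => c * F x) K := by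
  obtain ⟨C, hC, rfl⟩ := hF
  exact ⟨C, fun n => ⟨(hC n).1, (hC n).2.1, (hC n).2.2.const_mul hFc c⟩, rfl⟩

end ACStar

section OrdConnected

variable {α : Type*} [LinearOrder α] [TopologicalSpace α] [OrderClosedTopology α] {J J' : Set α}

lemma Set.OrdConnected.Ioo_subset_of_mem_closure (hJ : J.OrdConnected) {x y : α}
    (hx : x ∈ closure J) (hy : y ∈ closure J) : Ioo x y ⊆ J := fun t ht => by
  obtain ⟨s, hst, hs⟩ := mem_closure_iff.1 hx (Iio t) isOpen_Iio ht.1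
  obtain ⟨s', hs't, hs'⟩ := mem_closure_iff.1 hy (Ioi t) isOpen_Ioi ht.2
  exact hJ.out hs hs' ⟨le_of_lt hst, le_of_lt hs't⟩

lemma Set.OrdConnected.forall_closure_le_or_forall_closure_le_of_disjoint (hJ : J.OrdConnected)
    (hJ' : J'.OrdConnected) (hd : Disjoint J J') :
    (∀ x ∈ closure J, ∀ y ∈ closure J', x ≤ y) ∨ (∀ x ∈ closure J, ∀ y ∈ closure J', y ≤ x) := by
  have hclosure {r : α → α → Prop} (hr : IsClosed {p : α × α | r p.1 p.2})
      (h : ∀ x ∈ J, ∀ y ∈ J', r x y) : ∀ x ∈ closure J, ∀ y ∈ closure J', r x y :=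
    fun x hx y hy => closure_minimal (fun p (hp : p ∈ J ×ˢ J') => h p.1 hp.1 p.2 hp.2) hr
      (by rw [closure_prod_eq]; exact mk_mem_prod hx hy)
  refine (?_ : (∀ x ∈ J, ∀ y ∈ J', x ≤ y) ∨ (∀ x ∈ J, ∀ y ∈ J', y ≤ x)).imp
    (hclosure (isClosed_le continuous_fst continuous_snd))
    (hclosure (isClosed_le continuous_snd continuous_fst))
  by_contra! hcon
  obtain ⟨⟨s, hs, t, ht, hts⟩, ⟨s', hs', t', ht', hst'⟩⟩ := hcon
  rcases le_or_gt s' t with h | h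
  · exact hd.ne_of_mem (hJ.out hs' hs ⟨h, hts.le⟩) ht rfl
  · exact hd.ne_of_mem hs' (hJ'.out ht ht' ⟨h.le, hst'.le⟩) rfl

end OrdConnected

section IntervalCover

def closureBounds (K T : Set ℝ) : ℝ × ℝ := (sInf (K ∩ closure T), sSup (K ∩ closure T))

variable {K T : Set ℝ}

lemma closureBounds_mem (hK : IsCompact K) (hne : (K ∩ closure T).Nonempty) :
    (closureBounds K T).1 ∈ K ∩ closure T ∧ (closureBounds K T).2 ∈ K ∩ closure T :=
  ⟨(hK.inter_right isClosed_closure).sInf_mem hne, (hK.inter_right isClosed_closure).sSup_mem hne⟩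

lemma mem_Icc_closureBounds (hK : IsCompact K) {x : ℝ} (hx : x ∈ K ∩ closure T) :
    x ∈ Icc (closureBounds K T).1 (closureBounds K T).2 :=
  ⟨csInf_le (hK.inter_right isClosed_closure).bddBelow hx,
    le_csSup (hK.inter_right isClosed_closure).bddAbove hx⟩

lemma exists_countable_nonoverlapping_cover {U Z : Set ℝ} (hK : IsCompact K) (hU : IsOpen U)
    (hZK : Z ⊆ K) (hZU : Z ⊆ U) :
    ∃ P : Set (ℝ × ℝ), P.Countable ∧ P.Pairwise (fun p q => p.2 ≤ q.1 ∨ q.2 ≤ p.1) ∧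
      (∀ p ∈ P, p.1 ≤ p.2 ∧ p.1 ∈ K ∧ p.2 ∈ K ∧ Ioo p.1 p.2 ⊆ U) ∧
      Z ⊆ ⋃ p ∈ P, Icc p.1 p.2 := by
  -- one interval for each component `T` of `U` meeting `Z`: the hull of `K ∩ closure T`
  set comps := connectedComponentIn U '' Z
  have hcomp : ∀ T ∈ comps, T.OrdConnected ∧ T ⊆ U ∧ (K ∩ closure T).Nonempty := by
    rintro _ ⟨x, hx, rfl⟩
    exact ⟨isPreconnected_connectedComponentIn.ordConnected, connectedComponentIn_subset _ _,
      x, hZK hx, subset_closure (mem_connectedComponentIn (hZU hx))⟩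
  have hdisj : comps.PairwiseDisjoint id := by
    rintro _ ⟨x, -, rfl⟩ _ ⟨y, -, rfl⟩ hne
    exact disjoint_left.2 fun z hzx hzy =>
      hne ((connectedComponentIn_eq hzx).trans (connectedComponentIn_eq hzy).symm)
  have hcount : comps.Countable := hdisj.countable_of_isOpen
    (fun _ ⟨_, _, h⟩ => h ▸ hU.connectedComponentIn)
    fun _ ⟨x, hx, h⟩ => h ▸ ⟨x, mem_connectedComponentIn (hZU hx)⟩
  refine ⟨closureBounds K '' comps, hcount.image _, ?_, ?_, fun z hz => ?_⟩
  · rintro _ ⟨T, hT, rfl⟩ _ ⟨T', hT', rfl⟩ hne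
    obtain ⟨hTo, -, hTne⟩ := hcomp T hT
    obtain ⟨hT'o, -, hT'ne⟩ := hcomp T' hT'
    have h := closureBounds_mem hK hTne
    have h' := closureBounds_mem hK hT'ne
    rcases hTo.forall_closure_le_or_forall_closure_le_of_disjoint hT'o
      (hdisj hT hT' fun hTT' => hne (hTT' ▸ rfl)) with hle | hle
    · exact Or.inl (hle _ h.2.2 _ h'.1.2)
    · exact Or.inr (hle _ h.1.2 _ h'.2.2)
  · rintro _ ⟨T, hT, rfl⟩
    obtain ⟨hTo, hTU, hTne⟩ := hcomp T hT
    obtain ⟨h1, h2⟩ := closureBounds_mem hK hTne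
    exact ⟨(mem_Icc_closureBounds hK h2).1, h1.1, h2.1,
      (hTo.Ioo_subset_of_mem_closure h1.2 h2.2).trans hTU⟩
  · exact mem_biUnion (mem_image_of_mem _ (mem_image_of_mem _ hz))
      (mem_Icc_closureBounds hK ⟨hZK hz, subset_closure (mem_connectedComponentIn (hZU hz))⟩)

end IntervalCover

section LuzinN

variable {a b : ℝ} {F : ℝ → ℝ} {K Z : Set ℝ}

lemma ofReal_sum_sub_le_volume {D : Finset (ℝ × ℝ)} {U : Set ℝ} (hle : ∀ p ∈ D, p.1 ≤ p.2)
    (hD : (D : Set (ℝ × ℝ)).Pairwise fun p q => p.2 ≤ q.1 ∨ q.2 ≤ p.1)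
    (hU : ∀ p ∈ D, Ioo p.1 p.2 ⊆ U) :
    ENNReal.ofReal (∑ p ∈ D, (p.2 - p.1)) ≤ volume U := by
  have hdisj : (D : Set (ℝ × ℝ)).PairwiseDisjoint fun p => Ioo p.1 p.2 := fun p hp q hq hpq =>
    (hD hp hq hpq).elim
      (fun h => (Ioc_disjoint_Ioc_of_le h).mono Ioo_subset_Ioc_self Ioo_subset_Ioc_self)
      (fun h => (Ioc_disjoint_Ioc_of_le h).symm.mono Ioo_subset_Ioc_self Ioo_subset_Ioc_self)
  rw [ENNReal.ofReal_sum_of_nonneg fun p hp => sub_nonneg.2 (hle p hp)]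
  simp_rw [← Real.volume_Ioo]
  rw [← measure_biUnion_finset hdisj fun _ _ => measurableSet_Ioo]
  exact measure_mono (iUnion₂_subset hU)

lemma tsum_osc_le_of_isPrePartition {P : Set (ℝ × ℝ)} {U : Set ℝ} {ε δ : ℝ}
    (hFδ : ∀ D, IsPrePartition a b K D → ∑ p ∈ D, (p.2 - p.1) < δ →
      ∑ p ∈ D, osc F (Icc p.1 p.2) < ε)
    (hKab : K ⊆ Icc a b) (hPd : P.Pairwise fun p q => p.2 ≤ q.1 ∨ q.2 ≤ p.1)
    (hPK : ∀ p ∈ P, p.1 ≤ p.2 ∧ p.1 ∈ K ∧ p.2 ∈ K ∧ Ioo p.1 p.2 ⊆ U)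
    (hUδ : volume U < ENNReal.ofReal δ) :
    ∑' p : P, ENNReal.ofReal (osc F (Icc p.1.1 p.1.2)) ≤ ENNReal.ofReal ε := by
  rw [ENNReal.tsum_eq_iSup_sum]
  refine iSup_le fun s => ?_
  rw [← Finset.sum_image (f := fun p : ℝ × ℝ => ENNReal.ofReal (osc F (Icc p.1 p.2)))
    fun x _ y _ h => Subtype.val_injective h]
  set D := s.image Subtype.val
  have hDP : ↑D ⊆ P := by simp [D]
  rcases D.eq_empty_or_nonempty with hD | hD
  · simp [hD]
  have hlen : ∑ p ∈ D, (p.2 - p.1) < δ := (ENNReal.ofReal_lt_ofReal_iff_of_nonneg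
    (Finset.sum_nonneg fun p hp => sub_nonneg.2 (hPK p (hDP hp)).1)).1 <|
      (ofReal_sum_sub_le_volume (fun p hp => (hPK p (hDP hp)).1) (hPd.mono hDP)
        fun p hp => (hPK p (hDP hp)).2.2.2).trans_lt hUδ
  have hends (p : ℝ × ℝ) (hp : p ∈ D) :
      p.1 ≤ p.2 ∧ p.1 ∈ K ∧ p.2 ∈ K ∧ Icc p.1 p.2 ⊆ Icc a b := by
    obtain ⟨h12, h1, h2, -⟩ := hPK p (hDP hp)
    exact ⟨h12, h1, h2, Icc_subset_Icc (hKab h1).1 (hKab h2).2⟩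
  rw [← ENNReal.ofReal_sum_of_nonneg fun p _ => osc_nonneg _ _]
  exact ENNReal.ofReal_le_ofReal (hFδ D ⟨hD, hends, hPd.mono hDP⟩ hlen).le

lemma ACStar.volume_image_eq_zero (hF : ACStar a b F K) (hFc : ContinuousOn F (Icc a b))
    (hK : IsClosed K) (hKab : K ⊆ Icc a b) (hZK : Z ⊆ K) (hZ : volume Z = 0) :
    volume (F '' Z) = 0 := by
  refine le_antisymm (ENNReal.le_of_forall_pos_le_add fun ε hε _ => ?_) bot_le
  obtain ⟨δ, hδ, hFδ⟩ := hF ε hε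
  obtain ⟨U, hZU, hU, hUδ⟩ := Set.exists_isOpen_lt_of_lt Z (ENNReal.ofReal δ)
    (hZ ▸ ENNReal.ofReal_pos.2 hδ)
  obtain ⟨P, hPc, hPd, hPK, hZP⟩ := exists_countable_nonoverlapping_cover
    (isCompact_Icc.of_isClosed_subset hK hKab) hU hZK hZU
  calc volume (F '' Z) ≤ volume (⋃ p ∈ P, F '' Icc p.1 p.2) := by
        rw [← image_iUnion₂]
        exact measure_mono (image_mono hZP)
    _ ≤ ∑' p : P, volume (F '' Icc p.1.1 p.1.2) := measure_biUnion_le _ hPc _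
    _ ≤ ∑' p : P, ENNReal.ofReal (osc F (Icc p.1.1 p.1.2)) := ENNReal.tsum_le_tsum fun p =>
        volume_image_le_osc isCompact_Icc (hFc.mono (Icc_subset_Icc
          (hKab (hPK p p.2).2.1).1 (hKab (hPK p p.2).2.2.1).2))
    _ ≤ ENNReal.ofReal ε := tsum_osc_le_of_isPrePartition hFδ hKab hPd hPK hUδ
    _ = 0 + ε := by simp

lemma ACGStar.volume_image_eq_zero (hF : ACGStar a b F K) (hFc : ContinuousOn F (Icc a b))
    (hZK : Z ⊆ K) (hZ : volume Z = 0) : volume (F '' Z) = 0 := by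
  obtain ⟨C, hC, rfl⟩ := hF
  refine measure_mono_null (?_ : F '' Z ⊆ ⋃ n, F '' (Z ∩ C n)) (measure_iUnion_null fun n =>
    (hC n).2.2.volume_image_eq_zero hFc (hC n).1 (hC n).2.1 inter_subset_right
      (measure_mono_null inter_subset_left hZ))
  rw [← image_iUnion, ← inter_iUnion]
  exact image_mono (subset_inter subset_rfl hZK)

end LuzinN

section DenjoyIntegral

variable {a b : ℝ} {f g F G : ℝ → ℝ}

lemma ACGStar.eq_of_ae_hasDerivAt_zero (hF : ACGStar a b F (Icc a b))
    (hFc : ContinuousOn F (Icc a b)) (hd : ∀ᵐ x ∂(volume.restrict (Icc a b)), HasDerivAt F 0 x)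
    {x : ℝ} (hx : x ∈ Icc a b) : F x = F a := by
  set A := {y ∈ Icc a b | HasDerivAt F 0 y}
  have hA : volume (F '' A) = 0 :=
    addHaar_image_eq_zero_of_det_fderivWithin_eq_zero volume (f' := fun _ => 0)
      (fun y hy => by simpa using hy.2.hasFDerivAt.hasFDerivWithinAt) fun _ _ => by simp
  have hAc : volume (Icc a b \ A) = 0 := by
    rw [ae_restrict_iff' measurableSet_Icc, ae_iff] at hd
    exact measure_mono_null (fun y hy => fun h => hy.2 ⟨hy.1, h hy.1⟩) hd
  have himage : volume (F '' Icc a b) = 0 := by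
    refine measure_mono_null ?_ (measure_union_null hA
      (hF.volume_image_eq_zero hFc sdiff_subset hAc))
    rw [← image_union, union_sdiff_self]
    exact image_mono subset_union_right
  have hsub : uIcc a x ⊆ Icc a b := uIcc_subset_Icc (left_mem_Icc.2 (hx.1.trans hx.2)) hx
  have hnull := measure_mono_null ((intermediate_value_uIcc (hFc.mono hsub)).trans
    (image_mono hsub)) himage
  rw [Real.volume_interval, ENNReal.ofReal_eq_zero, abs_nonpos_iff, sub_eq_zero] at hnull
  exact hnull

lemma HasDenjoyIntegralFn.add (hF : HasDenjoyIntegralFn a b f F)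
    (hG : HasDenjoyIntegralFn a b g G) : HasDenjoyIntegralFn a b (f + g) (F + G) := by
  obtain ⟨hFc, hFa, hFacg, hFd⟩ := hF
  obtain ⟨hGc, hGa, hGacg, hGd⟩ := hG
  refine ⟨hFc.add hGc, by simp [hFa, hGa], hFacg.add hGacg hFc hGc, ?_⟩
  filter_upwards [hFd, hGd] with x hFx hGx using hFx.add hGx

lemma HasDenjoyIntegralFn.const_mul (hF : HasDenjoyIntegralFn a b f F) (c : ℝ) :
    HasDenjoyIntegralFn a b (fun x => c * f x) (fun x => c * F x) := by
  obtain ⟨hFc, hFa, hFacg, hFd⟩ := hF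
  refine ⟨continuousOn_const.mul hFc, by simp [hFa], hFacg.const_mul hFc c, ?_⟩
  filter_upwards [hFd] with x hFx using hFx.const_mul c

lemma HasDenjoyIntegralFn.congr_ae (hF : HasDenjoyIntegralFn a b f F)
    (hfg : f =ᵐ[volume.restrict (Icc a b)] g) : HasDenjoyIntegralFn a b g F := by
  refine ⟨hF.1, hF.2.1, hF.2.2.1, ?_⟩
  filter_upwards [hF.2.2.2, hfg] with x hFx hfgx using hfgx ▸ hFx

theorem HasDenjoyIntegralFn.eqOn (hF : HasDenjoyIntegralFn a b f F)
    (hG : HasDenjoyIntegralFn a b g G) (hfg : f =ᵐ[volume.restrict (Icc a b)] g) :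
    EqOn F G (Icc a b) := fun x hx => by
  obtain ⟨hHc, hHa, hHacg, hHd⟩ := hF.add (hG.const_mul (-1))
  have hH := hHacg.eq_of_ae_hasDerivAt_zero hHc (by
    filter_upwards [hHd, hfg] with y hy hfgy
    simpa [hfgy] using hy) hx
  simp only [Pi.add_apply] at hH hHa
  linarith

lemma hasDenjoyIntegralFn_integral (hf : Continuous f) :
    HasDenjoyIntegralFn a b f (fun x => ∫ t in a..x, f t) := by
  have hderiv (x : ℝ) : HasDerivAt (fun x => ∫ t in a..x, f t) (f x) x :=
    (hf.integral_hasStrictDerivAt a x).hasDerivAt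
  obtain ⟨C, hC⟩ := isCompact_Icc.exists_bound_of_continuousOn (hf.continuousOn (s := Icc a b))
  have hlip : LipschitzOnWith C.toNNReal (fun x => ∫ t in a..x, f t) (Icc a b) :=
    (convex_Icc a b).lipschitzOnWith_of_nnnorm_hasDerivWithin_le
      (fun x _ => (hderiv x).hasDerivWithinAt) fun x hx => by
        rw [← NNReal.coe_le_coe, coe_nnnorm, Real.coe_toNNReal']
        exact (hC x hx).trans (le_max_left _ _)
  exact ⟨(continuous_iff_continuousAt.2 fun x => (hderiv x).continuousAt).continuousOn,
    intervalIntegral.integral_same, (ACStar.of_lipschitzOnWith hlip).acgStar,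
    Eventually.of_forall hderiv⟩

lemma DenjoyIntegrable.exists_continuousMap (hab : a ≤ b) (hf : DenjoyIntegrable a b f) :
    ∃ G : C(ℝ, ℝ), HasDenjoyIntegralFn a b f G := by
  obtain ⟨F, hFc, hFa, hFacg, hFd⟩ := hf
  let G : C(ℝ, ℝ) := ContinuousMap.IccExtend hab ⟨(Icc a b).domRestrict F, hFc.domRestrict⟩
  have hGF : EqOn G F (Icc a b) := fun x hx => by
    simp [G, IccExtend_of_mem hab _ hx, Set.domRestrict]
  refine ⟨G, G.continuous.continuousOn, (hGF (left_mem_Icc.2 hab)).trans hFa,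
    hFacg.congr hGF.symm, ?_⟩
  rw [← Measure.restrict_congr_set Ioo_ae_eq_Icc] at hFd ⊢
  filter_upwards [hFd, ae_restrict_mem measurableSet_Ioo] with x hx hxI
  exact hx.congr_of_eventuallyEq (eventually_of_mem (isOpen_Ioo.mem_nhds hxI)
    fun y hy => hGF (Ioo_subset_Icc_self hy))

end DenjoyIntegral

section IndefiniteIntegral

variable {a b : ℝ} {g h : MSpace a b}

lemma Xop_eq_mk {G : C(ℝ, ℝ)} (hG : HasDenjoyIntegralFn a b (fun x => g x) G) :
    Xop a b g = AEEqFun.mk G G.continuous.aestronglyMeasurable := by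
  have hex : ∃ F : C(ℝ, ℝ), HasDenjoyIntegralFn a b (fun x => g x) F := ⟨G, hG⟩
  rw [Xop, dif_pos hex, AEEqFun.mk_eq_mk, EventuallyEq, ae_restrict_iff' measurableSet_Icc]
  exact Eventually.of_forall fun x hx => (Classical.choose_spec hex).eqOn hG EventuallyEq.rfl hx

lemma Xop_add (hab : a ≤ b) (hg : DenjoyIntegrable a b fun x => g x)
    (hh : DenjoyIntegrable a b fun x => h x) : Xop a b (g + h) = Xop a b g + Xop a b h := by
  obtain ⟨G, hG⟩ := hg.exists_continuousMap hab
  obtain ⟨H, hH⟩ := hh.exists_continuousMap hab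
  have hGH : HasDenjoyIntegralFn a b (fun x => (g + h) x) ⇑(G + H) :=
    (hG.add hH).congr_ae (by filter_upwards [AEEqFun.coeFn_add g h] with x hx using hx.symm)
  rw [Xop_eq_mk hGH, Xop_eq_mk hG, Xop_eq_mk hH, AEEqFun.mk_add_mk]
  rfl

lemma Xop_smul (hab : a ≤ b) (r : ℝ) (hg : DenjoyIntegrable a b fun x => g x) :
    Xop a b (r • g) = r • Xop a b g := by
  obtain ⟨G, hG⟩ := hg.exists_continuousMap hab
  have hrG : HasDenjoyIntegralFn a b (fun x => (r • g) x) ⇑(r • G) :=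
    (hG.const_mul r).congr_ae (by filter_upwards [AEEqFun.coeFn_smul r g] with x hx using hx.symm)
  rw [Xop_eq_mk hrG, Xop_eq_mk hG, AEEqFun.smul_mk]
  rfl

end IndefiniteIntegral

section Volterra

variable {a b : ℝ}

/-- `C[a,b]` inside `M[a,b]`, extending functions to `ℝ` by their values at the endpoints. -/
def toMSpace (hab : a ≤ b) : C(Icc a b, ℝ) →ₗ[ℝ] MSpace a b :=
  ContinuousMap.toAEEqFunLinearMap _ ∘ₗ
    (ContinuousMap.compRightAlgHom ℝ ℝ ⟨projIcc a b hab, continuous_projIcc⟩).toLinearMap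

lemma toMSpace_apply (hab : a ≤ b) (u : C(Icc a b, ℝ)) :
    toMSpace hab u = AEEqFun.mk (ContinuousMap.IccExtend hab u)
      (ContinuousMap.IccExtend hab u).continuous.aestronglyMeasurable :=
  rfl

lemma toMSpace_injective (hab : a < b) : Function.Injective (toMSpace hab.le) := fun u v huv => by
  rw [toMSpace_apply, toMSpace_apply, AEEqFun.mk_eq_mk] at huv
  have h := Measure.eqOn_Icc_of_ae_eq volume hab.ne huv
    (ContinuousMap.IccExtend hab.le u).continuous.continuousOn
    (ContinuousMap.IccExtend hab.le v).continuous.continuousOn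
  ext t
  simpa using h t.2

def ContinuousMap.primitive (a : ℝ) (f : C(ℝ, ℝ)) : C(ℝ, ℝ) :=
  ⟨fun x => ∫ t in a..x, f t,
    intervalIntegral.continuous_primitive (fun _ _ => f.continuous.intervalIntegrable _ _) a⟩

def volterra (hab : a ≤ b) : C(Icc a b, ℝ) →L[ℝ] C(Icc a b, ℝ) :=
  LinearMap.mkContinuous
    { toFun := fun u => ((ContinuousMap.IccExtend hab u).primitive a).restrict (Icc a b)
      map_add' := fun u v => by
        ext t
        exact intervalIntegral.integral_add
          ((ContinuousMap.IccExtend hab u).continuous.intervalIntegrable _ _)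
          ((ContinuousMap.IccExtend hab v).continuous.intervalIntegrable _ _)
      map_smul' := fun r u => by
        ext t
        exact intervalIntegral.integral_smul r _ }
    (b - a) fun u => by
      refine (ContinuousMap.norm_le _ (by have := sub_nonneg.2 hab; positivity)).2 fun t => ?_
      refine (intervalIntegral.norm_integral_le_of_norm_le_const fun x _ =>
        u.norm_coe_le_norm (projIcc a b hab x)).trans ?_
      rw [mul_comm, abs_of_nonneg (sub_nonneg.2 t.2.1)]
      gcongr
      exact t.2.2

lemma volterra_apply (hab : a ≤ b) (u : C(Icc a b, ℝ)) (t : Icc a b) :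
    volterra hab u t = ∫ s in a..(t : ℝ), IccExtend hab u s :=
  rfl

lemma abs_volterra_pow_apply_le (hab : a ≤ b) (n : ℕ) (u : C(Icc a b, ℝ)) (t : Icc a b) :
    |(volterra hab ^ n) u t| ≤ ‖u‖ * (t - a) ^ n / n.factorial := by
  induction n generalizing t with
  | zero => simpa using u.norm_coe_le_norm t
  | succ n ih =>
    rw [pow_succ', mul_apply_eq_comp, volterra_apply, ← Real.norm_eq_abs]
    calc ‖∫ s in a..(t : ℝ), IccExtend hab ((volterra hab ^ n) u) s‖
        ≤ ∫ s in a..(t : ℝ), ‖u‖ * (s - a) ^ n / n.factorial := by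
          refine intervalIntegral.norm_integral_le_of_norm_le t.2.1 (ae_of_all _ fun s hs => ?_)
            (Continuous.intervalIntegrable (by fun_prop) _ _)
          have hs' : s ∈ Icc a b := ⟨hs.1.le, hs.2.trans t.2.2⟩
          rw [IccExtend_of_mem hab _ hs', Real.norm_eq_abs]
          exact ih ⟨s, hs'⟩
      _ = ‖u‖ * (t - a) ^ (n + 1) / (n + 1).factorial := by
          simp [intervalIntegral.integral_comp_sub_right (fun x => x ^ n), Nat.factorial_succ]
          field_simp

lemma norm_volterra_pow_le (hab : a ≤ b) (n : ℕ) :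
    ‖volterra hab ^ n‖ ≤ (b - a) ^ n / n.factorial := by
  have hba : 0 ≤ b - a := sub_nonneg.2 hab
  refine ContinuousLinearMap.opNorm_le_bound _ (by positivity) fun u =>
    (ContinuousMap.norm_le _ (by positivity)).2 fun t => ?_
  rw [Real.norm_eq_abs, div_mul_eq_mul_div, mul_comm]
  refine (abs_volterra_pow_apply_le hab n u t).trans ?_
  gcongr
  · exact sub_nonneg.2 t.2.1
  · exact t.2.2

end Volterra

section PolynomialAction

open Polynomial

variable {a b : ℝ}

lemma Xop_toMSpace (hab : a ≤ b) (u : C(Icc a b, ℝ)) :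
    Xop a b (toMSpace hab u) = toMSpace hab (volterra hab u) := by
  have hG : HasDenjoyIntegralFn a b (fun x => toMSpace hab u x)
      ((ContinuousMap.IccExtend hab u).primitive a) :=
    (hasDenjoyIntegralFn_integral (ContinuousMap.IccExtend hab u).continuous).congr_ae
      (AEEqFun.coeFn_mk _ _).symm
  rw [Xop_eq_mk hG, toMSpace_apply, AEEqFun.mk_eq_mk, EventuallyEq,
    ae_restrict_iff' measurableSet_Icc]
  exact Eventually.of_forall fun x hx => by
    simp only [ContinuousMap.coe_IccExtend, IccExtend_of_mem hab _ hx, volterra_apply]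
    rfl

lemma Xop_mem_range_toMSpace (hab : a ≤ b) {g : MSpace a b}
    (hg : DenjoyIntegrable a b fun x => g x) : Xop a b g ∈ LinearMap.range (toMSpace hab) := by
  obtain ⟨G, hG⟩ := hg.exists_continuousMap hab
  refine ⟨G.restrict (Icc a b), ?_⟩
  rw [Xop_eq_mk hG, toMSpace_apply, AEEqFun.mk_eq_mk, EventuallyEq,
    ae_restrict_iff' measurableSet_Icc]
  exact Eventually.of_forall fun x hx => by simp [IccExtend_of_mem hab _ hx]

variable (M : Submodule ℝ (MSpace a b)) (hXcl : ∀ g ∈ M, Xop a b g ∈ M)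
  (hDen : ∀ g ∈ M, DenjoyIntegrable a b fun x => g x)

def XopOn (hab : a ≤ b) : Module.End ℝ M where
  toFun g := ⟨Xop a b g, hXcl g g.2⟩
  map_add' g h := Subtype.ext (Xop_add hab (hDen g g.2) (hDen h h.2))
  map_smul' r g := Subtype.ext (Xop_smul hab r (hDen g g.2))

theorem bijective_aeval_XopOn (hab : a < b) (hC : ∀ u, toMSpace hab.le u ∈ M) {p : ℝ[X]}
    (hp : p.coeff 0 ≠ 0) : Function.Bijective (aeval (XopOn M hXcl hDen hab.le) p) := by
  set X := XopOn M hXcl hDen hab.le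
  let ι : C(Icc a b, ℝ) →ₗ[ℝ] M := (toMSpace hab.le).codRestrict M hC
  have hι : Function.Injective ι := fun u v h => toMSpace_injective hab (congrArg Subtype.val h)
  have hrange (g : M) : X g ∈ LinearMap.range ι := by
    obtain ⟨u, hu⟩ := Xop_mem_range_toMSpace hab.le (hDen g g.2)
    exact ⟨u, Subtype.ext hu⟩
  let ρ : M →ₗ[ℝ] C(Icc a b, ℝ) :=
    (LinearEquiv.ofInjective ι hι).symm.toLinearMap ∘ₗ X.codRestrict _ hrange
  have hιρ : ι ∘ₗ ρ = X := LinearMap.ext fun g =>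
    LinearEquiv.ofInjective_symm_apply ι (h := hι) (X.codRestrict _ hrange g)
  have hρι : ρ ∘ₗ ι = volterra hab.le := LinearMap.ext fun u => hι <|
    (LinearMap.congr_fun hιρ (ι u)).trans (Subtype.ext (Xop_toMSpace hab.le u))
  rw [← hιρ]
  refine bijective_aeval_comp_swap hp ρ ι ?_
  rw [hρι, ← ContinuousLinearMap.coe_aeval]
  exact (Module.End.isUnit_iff _).1 ((isUnit_aeval_of_norm_pow_le (norm_volterra_pow_le hab.le)
    hp).map ContinuousLinearMap.toLinearMapRingHom)

end PolynomialAction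

open Polynomial in
/-- Theorem: if `p ∈ ℝ[X]` has nonzero constant term, then multiplication by `p`
is an automorphism of any `ℝ[X]`-submodule `M` of `Den[a,b]` containing `C[a,b]`. -/
theorem polynomial_action_automorphism (a b : ℝ) (hab : a < b)
    (M : Submodule ℝ (MSpace a b))
    (hXcl : ∀ g ∈ M, Xop a b g ∈ M)
    (hC : ∀ F : C(ℝ, ℝ), AEEqFun.mk ⇑F F.continuous.aestronglyMeasurable ∈ M)
    (hDen : ∀ g ∈ M, DenjoyIntegrable a b fun x => g x)
    (p : Polynomial ℝ) (hp : p.coeff 0 ≠ 0) :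
    Set.BijOn (fun g => p.sum fun i c => c • (Xop a b)^[i] g)
      (M : Set (MSpace a b)) (M : Set (MSpace a b)) ∧
    (∀ g ∈ M, ∀ h ∈ M,
      (p.sum fun i c => c • (Xop a b)^[i] (g + h)) =
        (p.sum fun i c => c • (Xop a b)^[i] g) + (p.sum fun i c => c • (Xop a b)^[i] h)) ∧
    (∀ r : ℝ, ∀ g ∈ M,
      (p.sum fun i c => c • (Xop a b)^[i] (r • g)) =
        r • p.sum fun i c => c • (Xop a b)^[i] g) ∧
    (∀ g ∈ M,
      (p.sum fun i c => c • (Xop a b)^[i] (Xop a b g)) =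
        Xop a b (p.sum fun i c => c • (Xop a b)^[i] g)) := by
  set X := XopOn M hXcl hDen hab.le
  have hX (g : M) : (X g : MSpace a b) = Xop a b g := rfl
  have hT (g : M) : (p.sum fun i c => c • (Xop a b)^[i] (g : MSpace a b)) = aeval X p g :=
    (coe_aeval_apply_eq_sum_iterate X hX p g).symm
  have hbij := bijective_aeval_XopOn M hXcl hDen hab (fun u => hC _) hp
  have hcomm : X * aeval X p = aeval X p * X := by
    simpa using ((commute_X p).map (aeval X)).eq
  refine ⟨?_, fun g hg h hh => ?_, fun r g hg => ?_, fun g hg => ?_⟩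
  · simpa using Function.Semiconj.bijOn_range (fun g => (hT g).symm) hbij Subtype.val_injective
  · simpa only [← hT, Submodule.coe_add] using
      congrArg Subtype.val (map_add (aeval X p) ⟨g, hg⟩ ⟨h, hh⟩)
  · simpa only [← hT, Submodule.coe_smul] using
      congrArg Subtype.val (map_smul (aeval X p) r ⟨g, hg⟩)
  · simpa only [← hT, Module.End.mul_apply, hX] using
      (congrArg Subtype.val (LinearMap.congr_fun hcomm ⟨g, hg⟩)).symm
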